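/- Let H→ be an oriented graph whose underlying graph H has maximum degree at most 3, suppose H→ admits no pushable homomorphism to the Paley tournament Pal_7, and suppose every oriented graph with strictly fewer vertices whose underlying graph has maximum degree at most 3 does admit a pushable homomorphism to Pal_7. Then H is 3-regular: every vertex of H has degree exactly 3. -/

import Mathlib

/-- An oriented graph: a loopless directed graph without opposite arcs. -/
structure OrientedGraph (V : Type*) where
  adj : V → V → Prop
  irrefl' : ∀ v, ¬ adj v v
  asymm' : ∀ u v, adj u v → ¬ adj v u

namespace OrientedGraph

variable {V W : Type*}

/-- Pushing a set `S` of vertices reverses every arc with exactly one endpoint in `S`. -/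
def push (G : OrientedGraph V) (S : Set V) : OrientedGraph V where
  adj u v := ((u ∈ S ↔ v ∈ S) ∧ G.adj u v) ∨ (¬(u ∈ S ↔ v ∈ S) ∧ G.adj v u)
  irrefl' v := by
    rintro (⟨_, h⟩ | ⟨h, _⟩)
    · exact G.irrefl' v h
    · exact h Iff.rfl
  asymm' u v := by
    rintro (⟨h1, h2⟩ | ⟨h1, h2⟩) (⟨h3, h4⟩ | ⟨h3, h4⟩)
    · exact G.asymm' u v h2 h4
    · exact h3 h1.symm
    · exact h1 h3.symm
    · exact G.asymm' v u h2 h4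

/-- A homomorphism of oriented graphs. -/
def IsHom (G : OrientedGraph V) (H : OrientedGraph W) (f : V → W) : Prop :=
  ∀ u v, G.adj u v → H.adj (f u) (f v)

/-- A pushable homomorphism: a homomorphism from some graph obtained from `G`
by pushing a set of vertices. -/
def IsPushableHom (G : OrientedGraph V) (H : OrientedGraph W) (f : V → W) : Prop :=
  ∃ S : Set V, IsHom (G.push S) H f

/-- The underlying (simple) undirected graph of an oriented graph. -/
def toSimpleGraph (G : OrientedGraph V) : SimpleGraph V where
  Adj u v := G.adj u v ∨ G.adj v u
  symm := ⟨fun _ _ h => Or.symm h⟩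
  loopless := ⟨fun v h => h.elim (G.irrefl' v) (G.irrefl' v)⟩

/-- The oriented chromatic number: the least order of an oriented graph that `G`
admits a homomorphism to. -/
noncomputable def orientedChromatic (G : OrientedGraph V) : ℕ :=
  sInf {n | ∃ (H : OrientedGraph (Fin n)) (f : V → Fin n), IsHom G H f}

/-- The pushable chromatic number: the least order of an oriented graph that `G`
admits a pushable homomorphism to. -/
noncomputable def pushableChromatic (G : OrientedGraph V) : ℕ :=
  sInf {n | ∃ (H : OrientedGraph (Fin n)) (f : V → Fin n), IsPushableHom G H f}

/-- `signedAdj C true u w` means `w ∈ N⁺(u)`; `signedAdj C false u w` means `w ∈ N⁻(u)`. -/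
def signedAdj (C : OrientedGraph V) : Bool → V → V → Prop
  | true, u, w => C.adj u w
  | false, u, w => C.adj w u

/-- The `s`-neighborhood of a set of vertices. -/
def signedNbhd (C : OrientedGraph V) (s : Bool) (S : Set V) : Set V :=
  {w | ∃ u ∈ S, C.signedAdj s u w}

/-- The set `N^a(J)` for a sign vector `a` and a tuple `v` of vertices. -/
def NSet (C : OrientedGraph V) {j : ℕ} (a : Fin j → Bool) (v : Fin j → V) : Set V :=
  {w | (∀ i, C.signedAdj (a i) (v i) w) ∨ (∀ i, C.signedAdj (!(a i)) (v i) w)}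

/-- Property `P(j,k)`: for every sign vector `a ∈ {+,-}^j` and every set of `j`
distinct vertices, `|N^a(J)| ≥ k`. -/
def HasPropP (C : OrientedGraph V) (j k : ℕ) : Prop :=
  ∀ (a : Fin j → Bool) (v : Fin j → V), Function.Injective v → k ≤ (C.NSet a v).ncard

end OrientedGraph

/-- The Paley tournament on `ZMod 7`: `ij` is an arc iff `j - i ∈ {1, 2, 4}`. -/
def Pal7 : OrientedGraph (ZMod 7) where
  adj i j := j - i = 1 ∨ j - i = 2 ∨ j - i = 4
  irrefl' := by decide
  asymm' := by decide

/-- `mad(G) < 3`: every nonempty subgraph `H` satisfies `2|E(H)|/|V(H)| < 3`. -/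
def MadLT3 {V : Type*} (G : SimpleGraph V) : Prop :=
  ∀ H : G.Subgraph, H.verts.Nonempty → 2 * H.edgeSet.ncard < 3 * H.verts.ncard

/-- Degeneracy at most `d`: every nonempty set of vertices contains a vertex with
at most `d` neighbors inside the set. -/
def DegeneracyLE {V : Type*} (G : SimpleGraph V) (d : ℕ) : Prop :=
  ∀ s : Set V, s.Nonempty → ∃ v ∈ s, (s ∩ G.neighborSet v).ncard ≤ d

/-! A vertex `v` of degree at most 2 in a minimal counterexample `H` can be reduced: delete `v`
and, if it has two neighbours, join them by an arc; the result is still subcubic, since each of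
them loses `v`. The smaller graph has a pushable homomorphism to `Pal7`, in which the neighbours
of `v` receive distinct colours. Any two distinct vertices of `Pal7` have a common neighbour with
any prescribed pair of orientations, so `v` can be coloured as well, without pushing it. -/

namespace OrientedGraph

variable {V W X : Type*}

def comap (f : W → V) (G : OrientedGraph V) : OrientedGraph W where
  adj a b := G.adj (f a) (f b)
  irrefl' a := G.irrefl' (f a)
  asymm' a b := G.asymm' (f a) (f b)

def addArc (G : OrientedGraph V) (a b : V) (hab : a ≠ b) : OrientedGraph V where
  adj x y := G.adj x y ∨ (x = a ∧ y = b ∧ ¬ G.adj b a)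
  irrefl' x := by
    rintro (h | ⟨rfl, rfl, -⟩)
    exacts [G.irrefl' x h, hab rfl]
  asymm' x y := by
    rintro (h | ⟨rfl, rfl, hba⟩) (h' | ⟨hy, hx, hba'⟩)
    · exact G.asymm' x y h h'
    · exact hba' (hx ▸ hy ▸ h)
    · exact hba h'
    · exact hab hy.symm

variable {G : OrientedGraph V} {K : OrientedGraph X}

@[simp]
theorem toSimpleGraph_push (S : Set V) : (G.push S).toSimpleGraph = G.toSimpleGraph := by
  ext u v
  simp only [toSimpleGraph, push]
  by_cases h : u ∈ S ↔ v ∈ S <;> simp only [h, iff_comm (a := v ∈ S)] <;> tauto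

theorem IsHom.ne_of_adj {f : V → X} (hf : G.IsHom K f) {a b : V}
    (hab : G.toSimpleGraph.Adj a b) : f a ≠ f b := by
  intro hfab
  rcases hab with h | h
  · exact K.irrefl' (f b) (hfab ▸ hf a b h)
  · exact K.irrefl' (f b) (hfab ▸ hf b a h)

theorem push_image_adj_iff {f : W → V} (hf : Function.Injective f) (S : Set W) (a b : W) :
    (G.push (f '' S)).adj (f a) (f b) ↔ ((G.comap f).push S).adj a b := by
  simp only [push, comap, hf.mem_set_image]

theorem push_adj_mono {G₁ G₂ : OrientedGraph V} (h : ∀ a b, G₁.adj a b → G₂.adj a b)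
    {S : Set V} {a b : V} : (G₁.push S).adj a b → (G₂.push S).adj a b := by
  rintro (⟨hS, hab⟩ | ⟨hS, hba⟩)
  exacts [.inl ⟨hS, h a b hab⟩, .inr ⟨hS, h b a hba⟩]

theorem ncard_neighborSet_comap_val (v : V) (w : {u // u ≠ v}) :
    ((G.comap Subtype.val).toSimpleGraph.neighborSet w).ncard =
      (G.toSimpleGraph.neighborSet w \ {v}).ncard := by
  rw [← Set.ncard_image_of_injective _ Subtype.val_injective]
  congr 1
  ext u
  constructor
  · rintro ⟨u, hu, rfl⟩
    exact ⟨hu, u.2⟩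
  · rintro ⟨hu, huv⟩
    exact ⟨⟨u, huv⟩, hu, rfl⟩

theorem addArc_adj_left_right {a b : V} (hab : a ≠ b) :
    (G.addArc a b hab).toSimpleGraph.Adj a b := by
  by_cases hba : G.adj b a
  exacts [.inr (.inl hba), .inl (.inr ⟨rfl, rfl, hba⟩)]

theorem neighborSet_addArc_subset [DecidableEq V] {a b : V} (hab : a ≠ b) (x : V) :
    (G.addArc a b hab).toSimpleGraph.neighborSet x ⊆
      insert (if x = a then b else a) (G.toSimpleGraph.neighborSet x) := by
  rintro y ((h | ⟨rfl, rfl, -⟩) | (h | ⟨rfl, rfl, -⟩))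
  · exact .inr (.inl h)
  · simp
  · exact .inr (.inr h)
  · simp [hab.symm]

theorem ncard_neighborSet_addArc_le [Finite V] {a b : V} (hab : a ≠ b) (x : V) :
    ((G.addArc a b hab).toSimpleGraph.neighborSet x).ncard ≤
      (G.toSimpleGraph.neighborSet x).ncard + 1 := by
  classical
  exact (Set.ncard_le_ncard (neighborSet_addArc_subset hab x)).trans (Set.ncard_insert_le _ _)

theorem neighborSet_addArc_of_ne {a b : V} (hab : a ≠ b) {x : V} (hxa : x ≠ a) (hxb : x ≠ b) :
    (G.addArc a b hab).toSimpleGraph.neighborSet x = G.toSimpleGraph.neighborSet x := by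
  ext y
  simp only [SimpleGraph.mem_neighborSet, toSimpleGraph, addArc]
  constructor
  · rintro ((h | ⟨rfl, -, -⟩) | (h | ⟨-, rfl, -⟩))
    exacts [.inl h, absurd rfl hxa, .inr h, absurd rfl hxb]
  · rintro (h | h)
    exacts [.inl (.inl h), .inr (.inl h)]

theorem isHom_push_extend [DecidableEq V] {v : V} {G' : OrientedGraph {u // u ≠ v}}
    (hle : ∀ a b : {u // u ≠ v}, G.adj a b → G'.adj a b) {S' : Set {u // u ≠ v}}
    {f' : {u // u ≠ v} → X} (hf' : (G'.push S').IsHom K f') (c : X)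
    (hc : ∀ u (hu : u ≠ v), ((G.push (Subtype.val '' S')).adj u v → K.adj (f' ⟨u, hu⟩) c) ∧
      ((G.push (Subtype.val '' S')).adj v u → K.adj c (f' ⟨u, hu⟩))) :
    (G.push (Subtype.val '' S')).IsHom K fun u => if h : u = v then c else f' ⟨u, h⟩ := by
  intro a b hab
  by_cases ha : a = v
  · subst ha
    have hb : b ≠ a := by rintro rfl; exact (G.push _).irrefl' b hab
    simpa [hb] using (hc b hb).2 hab
  by_cases hb : b = v
  · subst hb
    simpa [ha] using (hc a ha).1 hab
  simp only [ha, hb, dite_false]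
  exact hf' _ _ (push_adj_mono hle
    ((push_image_adj_iff Subtype.val_injective S' ⟨a, ha⟩ ⟨b, hb⟩).1 hab))

end OrientedGraph

instance (i j : ZMod 7) : Decidable (Pal7.adj i j) :=
  inferInstanceAs (Decidable (j - i = 1 ∨ j - i = 2 ∨ j - i = 4))

instance (s : Bool) (i j : ZMod 7) : Decidable (Pal7.signedAdj s i j) := by
  cases s <;> unfold OrientedGraph.signedAdj <;> infer_instance

theorem pal7_exists_signedAdj_pair :
    ∀ (x y : ZMod 7) (s t : Bool), (x = y → s = t) →
      ∃ c, Pal7.signedAdj s x c ∧ Pal7.signedAdj t y c := by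
  decide

theorem pal7_exists_signedAdj_of_ncard_le_two {U : Type*} [Finite U] {N : Set U}
    (hN : N.ncard ≤ 2) {φ : U → ZMod 7} (hφ : N.InjOn φ) (σ : U → Bool) :
    ∃ c, ∀ u ∈ N, Pal7.signedAdj (σ u) (φ u) c := by
  obtain h0 | h1 | h2 : N.ncard = 0 ∨ N.ncard = 1 ∨ N.ncard = 2 := by omega
  · rw [Set.ncard_eq_zero] at h0
    exact ⟨0, by simp [h0]⟩
  · obtain ⟨a, rfl⟩ := Set.ncard_eq_one.mp h1
    obtain ⟨c, hc, -⟩ := pal7_exists_signedAdj_pair (φ a) (φ a) (σ a) (σ a) fun _ => rfl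
    exact ⟨c, by simpa using hc⟩
  · obtain ⟨a, b, hab, rfl⟩ := Set.ncard_eq_two.mp h2
    obtain ⟨c, hca, hcb⟩ := pal7_exists_signedAdj_pair (φ a) (φ b) (σ a) (σ b)
      fun h => absurd (hφ (by simp) (by simp) h) hab
    exact ⟨c, by simp [hca, hcb]⟩

namespace OrientedGraph

variable {V : Type*} [Finite V]

theorem exists_pushableHom_pal7_of_deleteVertex (H : OrientedGraph V) {v : V}
    (hv : (H.toSimpleGraph.neighborSet v).ncard ≤ 2) (G' : OrientedGraph {u // u ≠ v})
    (hle : ∀ a b : {u // u ≠ v}, H.adj a b → G'.adj a b)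
    (hlink : ∀ a b : {u // u ≠ v}, a ≠ b →
      H.toSimpleGraph.Adj v a → H.toSimpleGraph.Adj v b → G'.toSimpleGraph.Adj a b)
    (hG' : ∃ f', G'.IsPushableHom Pal7 f') :
    ∃ f, H.IsPushableHom Pal7 f := by
  classical
  obtain ⟨f', S', hf'⟩ := hG'
  set T := Subtype.val '' S'
  let N : Set {u // u ≠ v} := Subtype.val ⁻¹' H.toSimpleGraph.neighborSet v
  have hN : N.ncard ≤ 2 := (Set.ncard_preimage_of_injective_subset_range Subtype.val_injective
    fun u hu => ⟨⟨u, (H.toSimpleGraph.ne_of_adj hu).symm⟩, rfl⟩).trans_le hv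
  have hinj : N.InjOn f' := fun a ha b hb hab => by
    by_contra hne
    exact hf'.ne_of_adj (by rw [toSimpleGraph_push]; exact hlink a b hne ha hb) hab
  obtain ⟨c, hc⟩ := pal7_exists_signedAdj_of_ncard_le_two hN hinj
    fun u => decide ((H.push T).adj u v)
  have hmem {u : V} (hu : u ≠ v) (h : (H.push T).toSimpleGraph.Adj v u) : ⟨u, hu⟩ ∈ N := by
    rwa [toSimpleGraph_push] at h
  refine ⟨_, T, isHom_push_extend hle hf' c fun u hu => ⟨fun h => ?_, fun h => ?_⟩⟩
  · have hcu := hc _ (hmem hu (.inr h))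
    rwa [decide_eq_true h] at hcu
  · simpa only [decide_eq_false ((H.push T).asymm' v u h), signedAdj] using
      hc _ (hmem hu (.inl h))

theorem exists_subcubic_deleteVertex (H : OrientedGraph V)
    (hdeg : ∀ u, (H.toSimpleGraph.neighborSet u).ncard ≤ 3) {v : V}
    (hv : (H.toSimpleGraph.neighborSet v).ncard ≤ 2) :
    ∃ G' : OrientedGraph {u // u ≠ v}, (∀ a b : {u // u ≠ v}, H.adj a b → G'.adj a b) ∧
      (∀ a b : {u // u ≠ v}, a ≠ b →
        H.toSimpleGraph.Adj v a → H.toSimpleGraph.Adj v b → G'.toSimpleGraph.Adj a b) ∧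
      ∀ w, (G'.toSimpleGraph.neighborSet w).ncard ≤ 3 := by
  have hdeg' (w : {u // u ≠ v}) :
      ((H.comap Subtype.val).toSimpleGraph.neighborSet w).ncard ≤ 3 := by
    rw [ncard_neighborSet_comap_val]
    exact (Set.ncard_sdiff_singleton_le _ _).trans (hdeg w)
  rcases hv.lt_or_eq with hv | hv
  · refine ⟨H.comap Subtype.val, fun _ _ h => h, fun a b hab ha hb => ?_, hdeg'⟩
    have hv1 := (Set.ncard_le_one (s := H.toSimpleGraph.neighborSet v)).mp (by omega)
    exact absurd (Subtype.ext (hv1 _ ha _ hb)) hab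
  obtain ⟨u₁, u₂, hu, hN⟩ := Set.ncard_eq_two.mp hv
  have hu₁ : H.toSimpleGraph.Adj v u₁ := by simp [← SimpleGraph.mem_neighborSet, hN]
  have hu₂ : H.toSimpleGraph.Adj v u₂ := by simp [← SimpleGraph.mem_neighborSet, hN]
  let a₁ : {u // u ≠ v} := ⟨u₁, hu₁.ne.symm⟩
  let a₂ : {u // u ≠ v} := ⟨u₂, hu₂.ne.symm⟩
  have h12 : a₁ ≠ a₂ := fun h => hu (congrArg Subtype.val h)
  have hN' (a : {u // u ≠ v}) (h : H.toSimpleGraph.Adj v a) : a = a₁ ∨ a = a₂ := by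
    rw [← SimpleGraph.mem_neighborSet, hN] at h
    rcases h with h | h
    exacts [.inl (Subtype.ext h), .inr (Subtype.ext h)]
  refine ⟨(H.comap Subtype.val).addArc a₁ a₂ h12, fun _ _ h => .inl h, fun a b hab ha hb => ?_,
    fun w => ?_⟩
  · rcases hN' a ha with rfl | rfl <;> rcases hN' b hb with rfl | rfl
    exacts [absurd rfl hab, addArc_adj_left_right h12, (addArc_adj_left_right h12).symm,
      absurd rfl hab]
  by_cases hw : w = a₁ ∨ w = a₂
  · have hwv : v ∈ H.toSimpleGraph.neighborSet w := by
      rcases hw with rfl | rfl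
      exacts [hu₁.symm, hu₂.symm]
    calc _ ≤ ((H.comap Subtype.val).toSimpleGraph.neighborSet w).ncard + 1 :=
          ncard_neighborSet_addArc_le h12 w
      _ = (H.toSimpleGraph.neighborSet w).ncard - 1 + 1 := by
          rw [ncard_neighborSet_comap_val, Set.ncard_sdiff_singleton_of_mem hwv]
      _ ≤ 3 := by have := hdeg w; omega
  · obtain ⟨hw₁, hw₂⟩ := not_or.mp hw
    rw [neighborSet_addArc_of_ne h12 hw₁ hw₂]
    exact hdeg' w

end OrientedGraph

/-- If `H` is a minimum counterexample among subcubic oriented graphs to admitting a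
pushable homomorphism to `Pal7`, then `H` is cubic. -/
theorem subcubic_min_counterexample_is_cubic
    (V : Type) [Fintype V] (H : OrientedGraph V)
    (hdeg : ∀ v, (H.toSimpleGraph.neighborSet v).ncard ≤ 3)
    (hno : ¬ ∃ f : V → ZMod 7, H.IsPushableHom Pal7 f)
    (hmin : ∀ (W : Type) [Fintype W] (G : OrientedGraph W),
      Fintype.card W < Fintype.card V →
      (∀ w, (G.toSimpleGraph.neighborSet w).ncard ≤ 3) →
      ∃ f : W → ZMod 7, G.IsPushableHom Pal7 f) :
    ∀ v, (H.toSimpleGraph.neighborSet v).ncard = 3 := by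
  classical
  intro v
  by_contra hv3
  have hv : (H.toSimpleGraph.neighborSet v).ncard ≤ 2 := by have := hdeg v; omega
  obtain ⟨G', hle, hlink, hdeg'⟩ := H.exists_subcubic_deleteVertex hdeg hv
  have hcard : Fintype.card {u // u ≠ v} < Fintype.card V :=
    Fintype.card_subtype_lt (x := v) (by simp)
  exact hno (H.exists_pushableHom_pal7_of_deleteVertex hv G' hle hlink (hmin _ G' hcard hdeg'))
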